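/- arXiv:1002.4121 — 5 statements merged into one kernel-verified Lean document; each statement's English description precedes it below -/
import Mathlib

section
/- Let L : ℝ → ℝ be a differentiable function, increasing to infinity, slowly varying at infinity, such that x·L'(x)/L(x) is eventually decreasing as x → ∞. Define φ(t) = ∫ from 1 to t of L(u)/u du. Then log(L(t)·log t) / log(φ(t)) → 1 as t → ∞. -/
/-!
Monotonicity of `L` gives `φ t ≤ L t · log t`, hence `log φ t ≤ log (L t · log t)`. Conversely,
for `θ < 1` the integral over `[t ^ θ, t]` alone gives `φ t ≥ (1 - θ) · L (t ^ θ) · log t`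
(eventually). The hypothesis on `x L'(x) / L(x)`, the derivative of `s ↦ log L (e ^ s)`, makes
that function concave; being also eventually nonnegative, it satisfies
`log L (t ^ θ) ≥ κ log L t` for large `t` whenever `κ < θ`. Thus
`log φ t ≥ κ log (L t · log t)` eventually, for every `κ < 1`.
-/

open Filter Real

/-- L is slowly varying at infinity. -/
def SlowlyVarying (L : ℝ → ℝ) : Prop :=
  ∀ c > (0:ℝ), Tendsto (fun x => L (c * x) / L x) atTop (nhds 1)

open Set intervalIntegral

section LogarithmicIntegral

variable {f : ℝ → ℝ} {a b : ℝ}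

lemma integral_const_div_id (c : ℝ) (ha : 0 < a) (hb : 0 < b) :
    ∫ u in a..b, c / u = c * (log b - log a) := by
  simp only [div_eq_mul_inv, integral_const_mul]
  rw [integral_inv_of_pos ha hb, log_div hb.ne' ha.ne']

lemma MonotoneOn.intervalIntegrable_div_id (hf : MonotoneOn f (Icc a b)) (ha : 0 < a)
    (hab : a ≤ b) : IntervalIntegrable (fun u => f u / u) MeasureTheory.volume a b := by
  rw [← uIcc_of_le hab] at hf
  simp only [div_eq_mul_inv]
  refine hf.intervalIntegrable.mul_continuousOn (continuousOn_inv₀.mono fun u hu => ?_)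
  rw [uIcc_of_le hab] at hu
  exact (ha.trans_le hu.1).ne'

lemma MonotoneOn.mul_log_sub_le_integral_div (hf : MonotoneOn f (Icc a b)) (ha : 0 < a)
    (hab : a ≤ b) : f a * (log b - log a) ≤ ∫ u in a..b, f u / u := by
  rw [← integral_const_div_id _ ha (ha.trans_le hab)]
  refine integral_mono_on hab (monotoneOn_const.intervalIntegrable_div_id ha hab)
    (hf.intervalIntegrable_div_id ha hab) fun u hu => ?_
  gcongr
  · linarith [hu.1]
  · exact hf (left_mem_Icc.2 hab) hu hu.1

lemma MonotoneOn.integral_div_le_mul_log_sub (hf : MonotoneOn f (Icc a b)) (ha : 0 < a)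
    (hab : a ≤ b) : ∫ u in a..b, f u / u ≤ f b * (log b - log a) := by
  rw [← integral_const_div_id _ ha (ha.trans_le hab)]
  refine integral_mono_on hab (hf.intervalIntegrable_div_id ha hab)
    (monotoneOn_const.intervalIntegrable_div_id ha hab) fun u hu => ?_
  gcongr
  · linarith [hu.1]
  · exact hf hu (right_mem_Icc.2 hab) hu.2

end LogarithmicIntegral

section Phi

variable {L φ : ℝ → ℝ}

lemma mul_log_sub_le_phi_sub (hmono : MonotoneOn L (Ici 1))
    (hφ : ∀ t, φ t = ∫ u in (1:ℝ)..t, L u / u) {x t : ℝ} (hx : 1 ≤ x) (hxt : x ≤ t) :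
    L x * (log t - log x) ≤ φ t - φ x := by
  have hL : ∀ {a b}, 1 ≤ a → MonotoneOn L (Icc a b) := fun ha =>
    hmono.mono fun u hu => ha.trans hu.1
  rw [hφ, hφ, integral_interval_sub_left ((hL le_rfl).intervalIntegrable_div_id one_pos
    (hx.trans hxt)) ((hL le_rfl).intervalIntegrable_div_id one_pos hx)]
  exact (hL hx).mul_log_sub_le_integral_div (by linarith) hxt

lemma phi_le_mul_log (hmono : MonotoneOn L (Ici 1))
    (hφ : ∀ t, φ t = ∫ u in (1:ℝ)..t, L u / u) {t : ℝ} (ht : 1 ≤ t) :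
    φ t ≤ L t * log t := by
  simpa [hφ] using (hmono.mono Icc_subset_Ici_self).integral_div_le_mul_log_sub one_pos ht

lemma tendsto_phi_atTop (hmono : MonotoneOn L (Ici 1))
    (htop : Tendsto L atTop atTop) (hφ : ∀ t, φ t = ∫ u in (1:ℝ)..t, L u / u) :
    Tendsto φ atTop atTop := by
  obtain ⟨x, hx1, hLx⟩ := ((htop.eventually_gt_atTop 0).and (eventually_ge_atTop 1)).exists
  have hlin : Tendsto (fun t => φ x + L x * (log t - log x)) atTop atTop :=
    tendsto_atTop_add_const_left _ _ <| Tendsto.const_mul_atTop hx1 <|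
      tendsto_atTop_add_const_right _ _ tendsto_log_atTop
  refine tendsto_atTop_mono' _ ?_ hlin
  filter_upwards [eventually_ge_atTop x] with t ht
  linarith [mul_log_sub_le_phi_sub hmono hφ hLx ht]

end Phi

lemma concaveOn_log_comp_exp {L : ℝ → ℝ} {s₁ : ℝ}
    (hdiff : DifferentiableOn ℝ L (Ici (exp s₁))) (hpos : ∀ x ∈ Ici (exp s₁), 0 < L x)
    (hdec : AntitoneOn (fun x => x * deriv L x / L x) (Ici (exp s₁))) :
    ConcaveOn ℝ (Ici s₁) (fun s => log (L (exp s))) := by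
  have hexp : MapsTo exp (Ici s₁) (Ici (exp s₁)) := fun s hs => exp_le_exp.2 hs
  have hderiv : ∀ s ∈ Ioi s₁, HasDerivAt (fun s => log (L (exp s)))
      (exp s * deriv L (exp s) / L (exp s)) s := by
    intro s hs
    have hL : HasDerivAt L (deriv L (exp s)) (exp s) :=
      (hdiff.differentiableAt (Ici_mem_nhds (exp_lt_exp.2 hs))).hasDerivAt
    have := (hL.comp s (hasDerivAt_exp s)).log (hpos _ (hexp (Ioi_subset_Ici_self hs))).ne'
    simpa only [Function.comp_def, mul_comm] using this
  rw [← interior_Ici] at hderiv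
  refine AntitoneOn.concaveOn_of_deriv (convex_Ici s₁) ?_
    (fun s hs => (hderiv s hs).differentiableAt.differentiableWithinAt) ?_
  · exact ContinuousOn.log (hdiff.continuousOn.comp continuous_exp.continuousOn hexp)
      fun s hs => (hpos _ (hexp hs)).ne'
  · intro s hs r hr hsr
    rw [(hderiv s hs).deriv, (hderiv r hr).deriv]
    rw [interior_Ici] at hs hr
    exact hdec (hexp (Ioi_subset_Ici_self hs)) (hexp (Ioi_subset_Ici_self hr))
      (exp_le_exp.2 hsr)

lemma ConcaveOn.eventually_mul_le_comp_mul {g : ℝ → ℝ} {s₁ κ θ : ℝ}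
    (hg : ConcaveOn ℝ (Ici s₁) g) (hnn : ∀ s ∈ Ici s₁, 0 ≤ g s) (hκθ : κ < θ) (hθ₀ : 0 < θ)
    (hθ₁ : θ ≤ 1) : ∀ᶠ s in atTop, κ * g s ≤ g (θ * s) := by
  filter_upwards [eventually_gt_atTop s₁, eventually_ge_atTop 0,
    (tendsto_id.const_mul_atTop hθ₀).eventually_ge_atTop s₁,
    (tendsto_id.const_mul_atTop (sub_pos.2 hκθ)).eventually_ge_atTop ((1 - κ) * s₁)]
    with s hs hs₀ hθs hκs
  simp only [id] at hθs hκs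
  have hd : 0 < s - s₁ := sub_pos.2 hs
  -- `θ * s` is the convex combination of `s₁` and `s` with weight `w` on `s`
  set w := (θ * s - s₁) / (s - s₁) with hw
  have hw₀ : 0 ≤ w := div_nonneg (by linarith) hd.le
  have hw₁ : w ≤ 1 := (div_le_one hd).2 (by nlinarith)
  have hκw : κ ≤ w := (le_div_iff₀ hd).2 (by nlinarith)
  have hcomb : (1 - w) • s₁ + w • s = θ * s := by
    simp only [smul_eq_mul, hw]; field_simp; ring
  have := hg.2 self_mem_Ici hs.le (sub_nonneg.2 hw₁) hw₀ (by ring)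
  rw [hcomb, smul_eq_mul, smul_eq_mul] at this
  have hgs := hnn s hs.le
  nlinarith [mul_nonneg (sub_nonneg.2 hw₁) (hnn s₁ self_mem_Ici)]

lemma eventually_mul_log_le_log_rpow {L : ℝ → ℝ} (hdiff : DifferentiableOn ℝ L (Ici 1))
    (htop : Tendsto L atTop atTop)
    (hdec : ∃ x₀ : ℝ, AntitoneOn (fun x => x * deriv L x / L x) (Ici x₀))
    {κ θ : ℝ} (hκθ : κ < θ) (hθ₀ : 0 < θ) (hθ₁ : θ ≤ 1) :
    ∀ᶠ t in atTop, κ * log (L t) ≤ log (L (t ^ θ)) := by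
  obtain ⟨x₀, hdec⟩ := hdec
  obtain ⟨M, hM⟩ := eventually_atTop.1 (htop.eventually_ge_atTop 1)
  set X := max 1 (max M x₀)
  have hX : exp (log X) = X := exp_log (lt_max_of_lt_left one_pos)
  have hL : ∀ x ∈ Ici (exp (log X)), 1 ≤ L x := fun x hx =>
    hM x (le_trans (le_max_of_le_right (le_max_left _ _)) (hX ▸ hx))
  have hconc := concaveOn_log_comp_exp
    (hdiff.mono (Ici_subset_Ici.2 (by rw [hX]; exact le_max_left _ _)))
    (fun x hx => one_pos.trans_le (hL x hx))
    (hdec.mono (Ici_subset_Ici.2 (by rw [hX]; exact le_max_of_le_right (le_max_right _ _))))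
  have hev := hconc.eventually_mul_le_comp_mul
    (fun s hs => log_nonneg (hL _ (exp_le_exp.2 hs))) hκθ hθ₀ hθ₁
  filter_upwards [tendsto_log_atTop.eventually hev, eventually_gt_atTop 0] with t ht ht₀
  rwa [exp_log ht₀, mul_comm θ, ← rpow_def_of_pos ht₀] at ht

lemma eventually_mul_log_le_log_phi {L φ : ℝ → ℝ} (hdiff : DifferentiableOn ℝ L (Ici 1))
    (hmono : MonotoneOn L (Ici 1)) (htop : Tendsto L atTop atTop)
    (hdec : ∃ x₀ : ℝ, AntitoneOn (fun x => x * deriv L x / L x) (Ici x₀))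
    (hφ : ∀ t, φ t = ∫ u in (1:ℝ)..t, L u / u) {κ : ℝ} (hκ₀ : 0 < κ) (hκ₁ : κ < 1) :
    ∀ᶠ t in atTop, κ * log (L t * log t) ≤ log (φ t) := by
  set θ := (1 + κ) / 2 with hθ
  have hκθ : κ < θ := by linarith
  have hθ₁ : θ < 1 := by linarith
  have hpow : Tendsto (fun t : ℝ => t ^ θ) atTop atTop := tendsto_rpow_atTop (by linarith)
  filter_upwards [eventually_mul_log_le_log_rpow hdiff htop hdec hκθ (by linarith) hθ₁.le,
    hpow.eventually (htop.eventually_ge_atTop 1),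
    hpow.eventually ((tendsto_phi_atTop hmono htop hφ).eventually_ge_atTop 0),
    hpow.eventually_ge_atTop 1, htop.eventually_gt_atTop 0, eventually_gt_atTop 1,
    (tendsto_log_atTop.comp tendsto_log_atTop).eventually_ge_atTop (-log (1 - θ) / (1 - κ))]
    with t hκL hLx hφx hx hLt ht hloglog
  simp only [Function.comp_apply] at hloglog
  rw [div_le_iff₀ (by linarith)] at hloglog
  have hlogt : 0 < log t := log_pos ht
  have hlogx : log (t ^ θ) = θ * log t := log_rpow (by linarith) θ
  have hxt : t ^ θ ≤ t := by
    simpa using rpow_le_rpow_of_exponent_le ht.le hθ₁.le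
  -- on `[t ^ θ, t]` the integrand is at least `L (t ^ θ) / u`
  have hφt : L (t ^ θ) * ((1 - θ) * log t) ≤ φ t := by
    have := mul_log_sub_le_phi_sub hmono hφ hx hxt
    rw [hlogx] at this
    nlinarith
  have hpos : 0 < L (t ^ θ) * ((1 - θ) * log t) := by
    have : 0 < 1 - θ := by linarith
    positivity
  calc κ * log (L t * log t) = κ * log (L t) + κ * log (log t) := by
        rw [log_mul hLt.ne' hlogt.ne']; ring
    _ ≤ log (L (t ^ θ)) + log (1 - θ) + log (log t) := by nlinarith
    _ = log (L (t ^ θ) * ((1 - θ) * log t)) := by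
        rw [log_mul (by linarith) (by nlinarith), log_mul (by linarith) hlogt.ne']; ring
    _ ≤ log (φ t) := log_le_log hpos hφt

theorem stmt0_general (L : ℝ → ℝ)
    (hdiff : DifferentiableOn ℝ L (Set.Ici 1))
    (hmono : MonotoneOn L (Set.Ici 1))
    (htop : Tendsto L atTop atTop)
    (hdec : ∃ x₀ : ℝ, AntitoneOn (fun x => x * deriv L x / L x) (Set.Ici x₀))
    (φ : ℝ → ℝ) (hφ : ∀ t, φ t = ∫ u in (1:ℝ)..t, L u / u) :
    Tendsto (fun t => Real.log (L t * Real.log t) / Real.log (φ t)) atTop (nhds 1) := by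
  have hφtop := tendsto_phi_atTop hmono htop hφ
  have hlogφ : ∀ᶠ t in atTop, 0 < log (φ t) :=
    (tendsto_log_atTop.comp hφtop).eventually_gt_atTop 0
  have hupper : ∀ᶠ t in atTop, log (φ t) ≤ log (L t * log t) := by
    filter_upwards [hφtop.eventually_gt_atTop 0, eventually_ge_atTop 1] with t hφt ht
    exact log_le_log hφt (phi_le_mul_log hmono hφ ht)
  refine tendsto_order.2 ⟨fun a ha => ?_, fun b hb => ?_⟩
  · filter_upwards [hlogφ, hupper] with t hpos hle
    rw [lt_div_iff₀ hpos]
    nlinarith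
  · obtain ⟨κ, hbκ, hκ₁⟩ := exists_between (inv_lt_one_of_one_lt₀ hb)
    have hκ₀ : 0 < κ := (inv_pos.2 (by linarith)).trans hbκ
    have hκb : κ⁻¹ < b := (inv_lt_comm₀ hκ₀ (by linarith)).2 hbκ
    filter_upwards [hlogφ, eventually_mul_log_le_log_phi hdiff hmono htop hdec hφ hκ₀ hκ₁]
      with t hpos hle
    rw [div_lt_iff₀ hpos]
    calc log (L t * log t) ≤ κ⁻¹ * log (φ t) := by
          rw [inv_mul_eq_div, le_div_iff₀' hκ₀]; exact hle
      _ < b * log (φ t) := mul_lt_mul_of_pos_right hκb hpos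

theorem stmt0 (L : ℝ → ℝ)
    (hdiff : DifferentiableOn ℝ L (Set.Ici 1))
    (hmono : MonotoneOn L (Set.Ici 1))
    (htop : Tendsto L atTop atTop)
    (hsv : SlowlyVarying L)
    (hdec : ∃ x₀ : ℝ, AntitoneOn (fun x => x * deriv L x / L x) (Set.Ici x₀))
    (φ : ℝ → ℝ) (hφ : ∀ t, φ t = ∫ u in (1:ℝ)..t, L u / u) :
    Tendsto (fun t => Real.log (L t * Real.log t) / Real.log (φ t)) atTop (nhds 1) :=
  stmt0_general L hdiff hmono htop hdec φ hφ
end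

section
/- Let L : ℝ → ℝ be differentiable, increasing to infinity, slowly varying, with x·L'(x)/L(x) eventually decreasing, and let φ(t) = ∫_1^t L(u)/u du. Then φ(t) ≤ L(t)·log t for all t ≥ e, and L(t)·log t ≤ φ(t)·(1 + log L(t)) for t large. -/
/-!
The upper bound follows from `L u ≤ L t` on `[1, t]`. For the lower bound let
`ε(x) = x L'(x) / L(x)`. As `ε` is eventually decreasing, `log L z - ε(b) log z` increases on
`[a, b]` for large `a ≤ b`. On `[x, 2x]` this bounds `ε(2x) log 2` by `log (L (2x) / L x) → 0`,
so `ε → 0`; on `[x₁, t]` with `log L x₁ ≥ 2` it then gives `1 + ε(t) log t ≤ log L t` for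
large `t`. Hence `Ψ = φ (1 + log L) - (L + 1) log t` satisfies
`t Ψ' = L (log L - ε log t) + ε φ - 1 ≥ 0` eventually, and `φ (1 + log L) - L log t ≥ Ψ(T) + log t`
is eventually nonnegative.
-/

open Filter Real

open Set Topology

noncomputable def elasticity (L : ℝ → ℝ) (x : ℝ) : ℝ := x * deriv L x / L x

theorem integral_div_le_mul_log {L : ℝ → ℝ} {t : ℝ} (ht : 1 ≤ t)
    (hL : MonotoneOn L (Icc 1 t)) :
    ∫ u in (1:ℝ)..t, L u / u ≤ L t * log t := by
  have hinv : ContinuousOn (fun u : ℝ => u⁻¹) (uIcc 1 t) := by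
    rw [uIcc_of_le ht]
    exact continuousOn_inv₀.mono fun u hu => (zero_lt_one.trans_le hu.1).ne'
  calc ∫ u in (1:ℝ)..t, L u / u
      ≤ ∫ u in (1:ℝ)..t, L t * u⁻¹ := by
        refine intervalIntegral.integral_mono_on ht ?_ (hinv.intervalIntegrable.const_mul _) ?_
        · simp_rw [div_eq_mul_inv]
          exact (MonotoneOn.intervalIntegrable (by rwa [uIcc_of_le ht])).mul_continuousOn hinv
        · intro u hu
          rw [div_eq_mul_inv]
          gcongr
          · exact inv_nonneg.2 (zero_le_one.trans hu.1)
          · exact hL hu ⟨ht, le_rfl⟩ hu.2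
    _ = L t * log t := by
        rw [intervalIntegral.integral_const_mul, integral_inv_of_pos one_pos (by linarith),
          div_one]

theorem monotoneOn_log_sub_mul_log {L : ℝ → ℝ} {a b m : ℝ} (ha : 0 < a)
    (hL : DifferentiableOn ℝ L (Icc a b)) (hpos : ∀ x ∈ Icc a b, 0 < L x)
    (hm : ∀ x ∈ Ioo a b, m ≤ elasticity L x) :
    MonotoneOn (fun z => log (L z) - m * log z) (Icc a b) := by
  have hderiv : ∀ x ∈ Ioo a b, HasDerivAt (fun z => log (L z) - m * log z)
      ((elasticity L x - m) / x) x := by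
    intro x hx
    have hx0 : 0 < x := ha.trans hx.1
    refine (((hL.differentiableAt (Icc_mem_nhds hx.1 hx.2)).hasDerivAt.log
      (hpos x (Ioo_subset_Icc_self hx)).ne').sub
      ((hasDerivAt_log hx0.ne').const_mul m)).congr_deriv ?_
    unfold elasticity
    field_simp
  refine monotoneOn_of_hasDerivWithinAt_nonneg (f' := fun x => (elasticity L x - m) / x)
    (convex_Icc a b) ?_ ?_ ?_
  · exact (hL.continuousOn.log fun x hx => (hpos x hx).ne').sub
      (continuousOn_const.mul (continuousOn_log.mono fun x hx => (ha.trans_le hx.1).ne'))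
  · simpa only [interior_Icc] using fun x hx => (hderiv x hx).hasDerivWithinAt
  · rw [interior_Icc]
    exact fun x hx => div_nonneg (sub_nonneg.2 (hm x hx)) (ha.trans hx.1).le

theorem log_sub_elasticity_mul_log_le {L : ℝ → ℝ} {x₀ a b : ℝ} (hx₀ : 0 < x₀)
    (hdiff : DifferentiableOn ℝ L (Ici x₀)) (hpos : ∀ x ∈ Ici x₀, 0 < L x)
    (hanti : AntitoneOn (elasticity L) (Ici x₀)) (ha : x₀ ≤ a) (hab : a ≤ b) :
    log (L a) - elasticity L b * log a ≤ log (L b) - elasticity L b * log b := by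
  have hsub : Icc a b ⊆ Ici x₀ := fun x hx => ha.trans hx.1
  exact monotoneOn_log_sub_mul_log (hx₀.trans_le ha) (hdiff.mono hsub)
    (fun x hx => hpos x (hsub hx))
    (fun x hx => hanti (hsub (Ioo_subset_Icc_self hx)) (ha.trans hab) hx.2.le)
    ⟨le_rfl, hab⟩ ⟨hab, le_rfl⟩ hab

theorem eventually_elasticity_le {L : ℝ → ℝ} {x₀ δ : ℝ} (hx₀ : 0 < x₀)
    (hdiff : DifferentiableOn ℝ L (Ici x₀)) (hpos : ∀ x ∈ Ici x₀, 0 < L x)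
    (hanti : AntitoneOn (elasticity L) (Ici x₀)) (hsv : SlowlyVarying L) (hδ : 0 < δ) :
    ∀ᶠ t in atTop, elasticity L t ≤ δ := by
  have hlog2 : 0 < log 2 := log_pos one_lt_two
  have hratio : Tendsto (fun x => log (L (2 * x) / L x)) atTop (𝓝 0) := by
    simpa using (hsv 2 two_pos).log one_ne_zero
  have hdouble : ∀ᶠ x in atTop, elasticity L (2 * x) ≤ δ := by
    filter_upwards [hratio.eventually_lt_const (mul_pos hδ hlog2), eventually_ge_atTop x₀]
      with x hratio_lt hxx₀
    have hx : 0 < x := hx₀.trans_le hxx₀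
    have hkey := log_sub_elasticity_mul_log_le hx₀ hdiff hpos hanti hxx₀
      (by linarith : x ≤ 2 * x)
    rw [log_div (hpos _ (by simp only [mem_Ici]; linarith)).ne' (hpos x hxx₀).ne'] at hratio_lt
    rw [log_mul two_ne_zero hx.ne'] at hkey
    nlinarith
  filter_upwards [(tendsto_id.atTop_div_const two_pos).eventually hdouble] with t ht
  rwa [id, mul_div_cancel₀ t two_ne_zero] at ht

theorem eventually_one_add_elasticity_mul_log_le {L : ℝ → ℝ} {x₀ : ℝ} (hx₀ : 0 < x₀)
    (hdiff : DifferentiableOn ℝ L (Ici x₀)) (hpos : ∀ x ∈ Ici x₀, 0 < L x)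
    (hanti : AntitoneOn (elasticity L) (Ici x₀)) (hsv : SlowlyVarying L)
    (htop : Tendsto L atTop atTop) :
    ∀ᶠ t in atTop, 1 + elasticity L t * log t ≤ log (L t) := by
  obtain ⟨x₁, hLx₁, hx₁⟩ :=
    ((htop.eventually_ge_atTop (exp 2)).and (eventually_ge_atTop (max x₀ 2))).exists
  have hx₁x₀ : x₀ ≤ x₁ := (le_max_left _ _).trans hx₁
  have hlogx₁ : 0 < log x₁ := log_pos (by linarith [le_max_right x₀ 2])
  have hlogLx₁ : 2 ≤ log (L x₁) := (le_log_iff_exp_le (hpos x₁ hx₁x₀)).2 hLx₁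
  filter_upwards [eventually_elasticity_le hx₀ hdiff hpos hanti hsv (one_div_pos.2 hlogx₁),
    eventually_ge_atTop x₁] with t hε ht
  have hkey := log_sub_elasticity_mul_log_le hx₀ hdiff hpos hanti hx₁x₀ ht
  have : elasticity L t * log x₁ ≤ 1 := (le_div_iff₀ hlogx₁).1 hε
  linarith

theorem hasDerivAt_integral_div {L : ℝ → ℝ} {t : ℝ} (hL : ContinuousOn L (Ici 1))
    (ht : 1 < t) :
    HasDerivAt (fun s => ∫ u in (1:ℝ)..s, L u / u) (L t / t) t := by
  have hcont : ContinuousOn (fun u => L u / u) (Ici 1) :=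
    hL.div continuousOn_id fun u hu => (zero_lt_one.trans_le hu).ne'
  exact intervalIntegral.integral_hasDerivAt_right
    ((hcont.mono fun u hu => by simp_all [uIcc_of_le ht.le]).intervalIntegrable)
    ((hcont.mono Ioi_subset_Ici_self).stronglyMeasurableAtFilter isOpen_Ioi t ht)
    (hcont.continuousAt (Ici_mem_nhds ht))

theorem tendsto_integral_div_atTop {L : ℝ → ℝ} (hL : ContinuousOn L (Ici 1))
    (htop : Tendsto L atTop atTop) :
    Tendsto (fun t => ∫ u in (1:ℝ)..t, L u / u) atTop atTop := by
  obtain ⟨x₁, hx₁⟩ :=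
    eventually_atTop.1 ((htop.eventually_ge_atTop 1).and (eventually_ge_atTop 1))
  have hx₁1 : 1 ≤ x₁ := (hx₁ x₁ le_rfl).2
  have hint : ∀ a b, 1 ≤ a → 1 ≤ b →
      IntervalIntegrable (fun u => L u / u) MeasureTheory.volume a b :=
    fun a b ha hb => ((hL.div continuousOn_id fun u hu => (zero_lt_one.trans_le hu).ne').mono
      fun u hu => (le_min ha hb).trans hu.1).intervalIntegrable
  refine tendsto_atTop_mono' atTop ?_
    (tendsto_atTop_add_const_left _ ((∫ u in (1:ℝ)..x₁, L u / u) - log x₁) tendsto_log_atTop)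
  filter_upwards [eventually_ge_atTop x₁] with t ht
  have ht0 : 0 < t := by linarith
  rw [← intervalIntegral.integral_add_adjacent_intervals (hint 1 x₁ le_rfl hx₁1)
    (hint x₁ t hx₁1 (hx₁1.trans ht))]
  have hlower : ∫ u in x₁..t, 1 / u ≤ ∫ u in x₁..t, L u / u := by
    refine intervalIntegral.integral_mono_on ht ?_ (hint x₁ t hx₁1 (hx₁1.trans ht)) ?_
    · refine (continuousOn_const.div continuousOn_id fun u hu => ?_).intervalIntegrable
      rw [uIcc_of_le ht] at hu
      exact (zero_lt_one.trans_le (hx₁1.trans hu.1)).ne'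
    · intro u hu
      gcongr
      · linarith [hu.1]
      · exact (hx₁ u hu.1).1
  rw [integral_one_div_of_pos (by linarith) ht0, log_div ht0.ne' (by linarith)] at hlower
  linarith

theorem hasDerivAt_mul_one_add_log_sub {L φ : ℝ → ℝ} {t : ℝ} (ht : 0 < t)
    (hL : DifferentiableAt ℝ L t) (hLpos : 0 < L t) (hφ : HasDerivAt φ (L t / t) t) :
    HasDerivAt (fun s => φ s * (1 + log (L s)) - (L s + 1) * log s)
      ((L t * (log (L t) - elasticity L t * log t) + elasticity L t * φ t - 1) / t) t := by
  refine ((hφ.mul ((hL.hasDerivAt.log hLpos.ne').const_add 1)).sub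
    ((hL.hasDerivAt.add_const 1).mul (hasDerivAt_log ht.ne'))).congr_deriv ?_
  unfold elasticity
  field_simp
  ring

theorem monotoneOn_mul_one_add_log_sub {L φ : ℝ → ℝ} {T : ℝ} (hT : 0 < T)
    (hφ : ∀ t ∈ Ici T, HasDerivAt φ (L t / t) t) (hφ0 : ∀ t ∈ Ici T, 0 ≤ φ t)
    (hdiff : ∀ t ∈ Ici T, DifferentiableAt ℝ L t) (hL1 : ∀ t ∈ Ici T, 1 ≤ L t)
    (hε : ∀ t ∈ Ici T, 0 ≤ elasticity L t)
    (hmargin : ∀ t ∈ Ici T, 1 + elasticity L t * log t ≤ log (L t)) :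
    MonotoneOn (fun s => φ s * (1 + log (L s)) - (L s + 1) * log s) (Ici T) := by
  have hderiv : ∀ t ∈ Ici T, HasDerivAt (fun s => φ s * (1 + log (L s)) - (L s + 1) * log s)
      ((L t * (log (L t) - elasticity L t * log t) + elasticity L t * φ t - 1) / t) t :=
    fun t ht => hasDerivAt_mul_one_add_log_sub (hT.trans_le ht) (hdiff t ht)
      (zero_lt_one.trans_le (hL1 t ht)) (hφ t ht)
  refine monotoneOn_of_hasDerivWithinAt_nonneg (convex_Ici T)
    (fun t ht => (hderiv t ht).continuousAt.continuousWithinAt)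
    (fun t ht => (hderiv t (interior_subset ht)).hasDerivWithinAt) fun t ht => ?_
  replace ht := interior_subset ht
  have : 1 ≤ L t * (log (L t) - elasticity L t * log t) := by
    nlinarith [hL1 t ht, hmargin t ht]
  exact div_nonneg (by nlinarith [mul_nonneg (hε t ht) (hφ0 t ht)]) (hT.trans_le ht).le

theorem eventually_mul_log_le_integral_mul_one_add_log {L : ℝ → ℝ}
    (hdiff : DifferentiableOn ℝ L (Ici 1)) (hmono : MonotoneOn L (Ici 1))
    (htop : Tendsto L atTop atTop) (hsv : SlowlyVarying L) {x₀ : ℝ}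
    (hanti : AntitoneOn (elasticity L) (Ici x₀)) :
    ∀ᶠ t in atTop, L t * log t ≤ (∫ u in (1:ℝ)..t, L u / u) * (1 + log (L t)) := by
  set φ := fun t => ∫ u in (1:ℝ)..t, L u / u
  obtain ⟨x₁, hx₁⟩ := eventually_atTop.1
    ((htop.eventually_ge_atTop 1).and (eventually_ge_atTop (max x₀ 1)))
  have hx₁1 : 1 ≤ x₁ := (le_max_right _ _).trans (hx₁ x₁ le_rfl).2
  have hsub : Ici x₁ ⊆ Ici 1 := Ici_subset_Ici.2 hx₁1
  have hmargin := eventually_one_add_elasticity_mul_log_le (zero_lt_one.trans_le hx₁1)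
    (hdiff.mono hsub) (fun x hx => zero_lt_one.trans_le (hx₁ x hx).1)
    (hanti.mono (Ici_subset_Ici.2 ((le_max_left _ _).trans (hx₁ x₁ le_rfl).2))) hsv htop
  obtain ⟨T, hT⟩ := eventually_atTop.1 (hmargin.and
    (((tendsto_integral_div_atTop hdiff.continuousOn htop).eventually_ge_atTop 0).and
      (eventually_gt_atTop x₁)))
  have hT1 : 1 < T := hx₁1.trans_lt (hT T le_rfl).2.2
  have hL1 : ∀ t ∈ Ici T, 1 ≤ L t := fun t ht => (hx₁ t (hT t ht).2.2.le).1
  have hε : ∀ t ∈ Ici T, 0 ≤ elasticity L t := fun t ht => by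
    have ht1 : 1 < t := hT1.trans_le ht
    have hderiv : 0 ≤ deriv L t :=
      derivWithin_of_mem_nhds (f := L) (Ici_mem_nhds ht1) ▸ hmono.derivWithin_nonneg
    exact div_nonneg (mul_nonneg (by linarith) hderiv) (by linarith [hL1 t ht])
  have hΨ := monotoneOn_mul_one_add_log_sub (φ := φ) (zero_lt_one.trans hT1)
    (fun t ht => hasDerivAt_integral_div hdiff.continuousOn (hT1.trans_le ht))
    (fun t ht => (hT t ht).2.1)
    (fun t ht => hdiff.differentiableAt (Ici_mem_nhds (hT1.trans_le ht))) hL1 hε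
    (fun t ht => (hT t ht).1)
  filter_upwards [eventually_ge_atTop T,
    tendsto_log_atTop.eventually_ge_atTop (-(φ T * (1 + log (L T)) - (L T + 1) * log T))]
    with t hTt hlog
  have := hΨ self_mem_Ici hTt hTt
  simp only at this
  linarith

theorem stmt1 (L : ℝ → ℝ)
    (hdiff : DifferentiableOn ℝ L (Set.Ici 1))
    (hmono : MonotoneOn L (Set.Ici 1))
    (htop : Tendsto L atTop atTop)
    (hsv : SlowlyVarying L)
    (hdec : ∃ x₀ : ℝ, AntitoneOn (fun x => x * deriv L x / L x) (Set.Ici x₀))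
    (φ : ℝ → ℝ) (hφ : ∀ t, φ t = ∫ u in (1:ℝ)..t, L u / u) :
    (∀ t, Real.exp 1 ≤ t → φ t ≤ L t * Real.log t) ∧
      (∀ᶠ t in atTop, L t * Real.log t ≤ φ t * (1 + Real.log (L t))) := by
  obtain ⟨x₀, hanti⟩ := hdec
  obtain rfl : φ = fun t => ∫ u in (1:ℝ)..t, L u / u := funext hφ
  refine ⟨fun t ht => ?_,
    eventually_mul_log_le_integral_mul_one_add_log hdiff hmono htop hsv hanti⟩
  exact integral_div_le_mul_log ((one_le_exp zero_le_one).trans ht)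
    (hmono.mono Icc_subset_Ici_self)
end

section
/- Let p > 0 and f(x) = (p+1)·x·(log log x)/(log x)^p for large x. Then any (asymptotic) inverse f^{-1} satisfies f^{-1}(y) ~ y·(log y)^p /((p+1)·log log y) as y → ∞, i.e., f applied to y·(log y)^p/((p+1) log log y) is asymptotically equal to y. -/
/-!
Put `g y = y (log y)^p / ((p+1) log log y)`. Then `log (g y) = log y + O(log log y) ~ log y`,
and taking logarithms once more, `log log (g y) ~ log log y`. Substituting these two
equivalences into `f (g y) = (p+1) g(y) log log (g y) / (log (g y))^p` gives
`f (g y) ~ (p+1) g(y) log log y / (log y)^p = y`.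
-/

open Filter Real Asymptotics

theorem Asymptotics.IsEquivalent.rpow_of_eventually_nonneg {α : Type*} {u v : α → ℝ}
    {l : Filter α} (hv : ∀ᶠ x in l, 0 ≤ v x) (h : u ~[l] v) {r : ℝ} :
    u ^ r ~[l] v ^ r := by
  have hv' : v =ᶠ[l] fun x => max (v x) 0 := hv.mono fun x hx => (max_eq_left hx).symm
  refine ((h.congr_right hv').rpow fun x => le_max_right _ _).congr_right ?_
  filter_upwards [hv'] with x hx
  show max (v x) 0 ^ r = v x ^ r
  rw [← hx]

theorem isEquivalent_log_mul_rpow_log_div_log_log (p : ℝ) {c : ℝ} (hc : c ≠ 0) :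
    (fun y => log (y * log y ^ p / (c * log (log y)))) ~[atTop] log := by
  have hloglog : (fun y => log (log y)) =o[atTop] log :=
    isLittleO_log_id_atTop.comp_tendsto tendsto_log_atTop
  have hlogloglog : (fun y => log (log (log y))) =o[atTop] log :=
    (hloglog.comp_tendsto tendsto_log_atTop).trans hloglog
  have hconst : (fun _ => log c) =o[atTop] log :=
    isLittleO_const_left.2 <| Or.inr <| tendsto_norm_atTop_atTop.comp tendsto_log_atTop
  refine (IsEquivalent.refl.add_isLittleO
    (((hloglog.const_mul_left p).sub hconst).sub hlogloglog)).congr_left ?_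
  filter_upwards [tendsto_log_atTop.eventually_gt_atTop 1] with y hly
  have hy : y ≠ 0 := by rintro rfl; norm_num at hly
  have hlly : 0 < log (log y) := log_pos hly
  simp only [Pi.add_apply]
  rw [log_div (by positivity) (by positivity), log_mul hy (by positivity), log_mul hc hlly.ne',
    log_rpow (by linarith)]
  ring

theorem tendsto_mul_rpow_log_div_log_log_atTop (p : ℝ) {c : ℝ} (hc : 0 < c) :
    Tendsto (fun y => y * log y ^ p / (c * log (log y))) atTop atTop := by
  have hlog := (isEquivalent_log_mul_rpow_log_div_log_log p hc.ne').symm.tendsto_atTop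
    tendsto_log_atTop
  refine (tendsto_exp_atTop.comp hlog).congr' ?_
  filter_upwards [eventually_gt_atTop 0, tendsto_log_atTop.eventually_gt_atTop 1] with y hy hly
  have hlly : 0 < log (log y) := log_pos hly
  exact exp_log (by positivity)

theorem stmt7 (p : ℝ) (hp : 0 < p) (f : ℝ → ℝ)
    (hf : ∀ᶠ x in atTop,
      f x = (p + 1) * x * Real.log (Real.log x) / (Real.log x) ^ p) :
    Tendsto
      (fun y => f (y * (Real.log y) ^ p / ((p + 1) * Real.log (Real.log y))) / y)
      atTop (nhds 1) := by
  have hc : 0 < p + 1 := by linarith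
  set g := fun y => y * log y ^ p / ((p + 1) * log (log y)) with hg
  have hlog : (fun y => log (g y)) ~[atTop] log :=
    isEquivalent_log_mul_rpow_log_div_log_log p hc.ne'
  have hloglog : (fun y => log (log (g y))) ~[atTop] fun y => log (log y) :=
    hlog.log tendsto_log_atTop
  have hlog_rpow : (fun y => log (g y)) ^ p ~[atTop] log ^ p :=
    hlog.rpow_of_eventually_nonneg (tendsto_log_atTop.eventually_ge_atTop 0)
  have hfg : (fun y => f (g y)) ~[atTop] id := by
    refine (((IsEquivalent.refl (u := fun y => (p + 1) * g y)).mul hloglog).div hlog_rpow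
      |>.congr_left ?_).congr_right ?_
    · exact ((tendsto_mul_rpow_log_div_log_log_atTop p hc).eventually hf).mono fun y h => h.symm
    · filter_upwards [tendsto_log_atTop.eventually_gt_atTop 1] with y hly
      have hlly : 0 < log (log y) := log_pos hly
      have hlyp : 0 < log y ^ p := rpow_pos_of_pos (by linarith) p
      simp only [Pi.mul_apply, Pi.div_apply, Pi.pow_apply, hg, id]
      field_simp
  exact (isEquivalent_iff_tendsto_one (eventually_ne_atTop 0)).mp hfg
end

section
/- Let X₁, …, X_n be independent symmetric real random variables with partial sum S_n = X₁ + ⋯ + X_n. Then for any x, y > 0: P(|S_n| > 2x + y) ≤ Σ_{k=1}^n P(|X_k| > y) + 4·(P(|S_n| > x))². -/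
/-!
Let `τ` be the first index at which `|S_k|` exceeds `x`. On `{|S_n| > 2x + y}`, either some
`|X_k| > y`, or `|S_τ| ≤ |S_{τ-1}| + |X_τ| ≤ x + y` and then the tail `S_n - S_τ` exceeds `x`.
The event `{τ = k}` depends only on `X_1, …, X_k` and the tail only on the other variables, so the
second case has probability at most `∑_k P(τ = k) P(|S_n - S_k| > x)`. Both factors are controlled
by reflection: flipping the signs of a block of coordinates preserves the joint law (a product of
symmetric laws), and twice a block sum is `S_n` plus a reflected copy of `S_n`. This gives Lévy's
inequality `∑_k P(τ = k) ≤ 2 P(|S_n| > x)` and `P(|S_n - S_k| > x) ≤ 2 P(|S_n| > x)`.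
-/

open MeasureTheory ProbabilityTheory Finset

lemma dependsOn_setOf_lt_abs_sum {ι : Type*} (x : ℝ) (s : Finset ι) :
    DependsOn (· ∈ {v : ι → ℝ | x < |∑ i ∈ s, v i|}) s := fun v w hvw => by
  simp only [Set.mem_ofPred_eq, sum_congr rfl fun i hi => hvw i (mem_coe.2 hi)]

section Reflection

variable {ι : Type*} [DecidableEq ι]

def signFlip (s : Finset ι) (v : ι → ℝ) : ι → ℝ :=
  fun i => if i ∈ s then -v i else v i

lemma measurable_signFlip (s : Finset ι) : Measurable (signFlip s) :=
  measurable_pi_lambda _ fun i => by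
    by_cases hi : i ∈ s <;> simp only [signFlip, hi, if_true, if_false]
    exacts [(measurable_pi_apply i).neg, measurable_pi_apply i]

lemma signFlip_apply_of_notMem {s : Finset ι} {i : ι} (hi : i ∉ s) (v : ι → ℝ) :
    signFlip s v i = v i := if_neg hi

lemma sum_signFlip [Fintype ι] (s : Finset ι) (v : ι → ℝ) :
    ∑ i, signFlip s v i = ∑ i ∈ sᶜ, v i - ∑ i ∈ s, v i := by
  rw [← sum_add_sum_compl s, sub_eq_neg_add, ← sum_neg_distrib]
  congr 1
  · exact sum_congr rfl fun i hi => if_pos hi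
  · exact sum_congr rfl fun i hi => if_neg (mem_compl.1 hi)

lemma map_signFlip_pi [Fintype ι] {ν : ι → Measure ℝ} [∀ i, IsProbabilityMeasure (ν i)]
    (hν : ∀ i, (ν i).map Neg.neg = ν i) (s : Finset ι) :
    (Measure.pi ν).map (signFlip s) = Measure.pi ν := by
  have hflip : signFlip s = fun v i => (if i ∈ s then Neg.neg else id) (v i) := by
    ext v i; by_cases hi : i ∈ s <;> simp [signFlip, hi]
  rw [hflip, Measure.pi_map_pi]
  · congr with i : 1
    by_cases hi : i ∈ s <;> simp [hi, hν]
  · intro i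
    by_cases hi : i ∈ s <;> simp only [hi, if_true, if_false]
    exacts [measurable_neg.aemeasurable, aemeasurable_id]

lemma measure_inter_lt_abs_sum_le [Fintype ι] {μ : Measure (ι → ℝ)} {s : Finset ι}
    (hμ : μ.map (signFlip sᶜ) = μ) {E : Set (ι → ℝ)} (hE : MeasurableSet E)
    (hEs : DependsOn (· ∈ E) s) (x : ℝ) :
    μ (E ∩ {v | x < |∑ i ∈ s, v i|}) ≤ 2 * μ (E ∩ {v | x < |∑ i, v i|}) := by
  set G := E ∩ {v | x < |∑ i, v i|}
  have hG : MeasurableSet G :=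
    hE.inter (measurableSet_lt measurable_const (by fun_prop))
  -- `2 ∑_{s} v = ∑ v + ∑ (signFlip sᶜ v)`, and flipping `sᶜ` does not move `v` out of `E`
  have hsub : E ∩ {v | x < |∑ i ∈ s, v i|} ⊆ G ∪ signFlip sᶜ ⁻¹' G := by
    rintro v ⟨hvE, hv : x < |∑ i ∈ s, v i|⟩
    by_contra hc
    have hflipE : signFlip sᶜ v ∈ E :=
      (hEs fun i hi => signFlip_apply_of_notMem (by simpa using hi) v).mpr hvE
    simp only [Set.mem_union, Set.mem_preimage, Set.mem_inter_iff, Set.mem_ofPred_eq, G,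
      hvE, hflipE, true_and, not_or, not_lt] at hc
    have htwo : 2 * ∑ i ∈ s, v i = ∑ i, v i + ∑ i, signFlip sᶜ v i := by
      rw [sum_signFlip, compl_compl, ← sum_add_sum_compl s v]; ring
    have := abs_add_le (∑ i, v i) (∑ i, signFlip sᶜ v i)
    rw [← htwo, abs_mul, abs_two] at this
    linarith [hc.1, hc.2]
  calc μ (E ∩ {v | x < |∑ i ∈ s, v i|}) ≤ μ G + μ (signFlip sᶜ ⁻¹' G) :=
        (measure_mono hsub).trans (measure_union_le _ _)
    _ = 2 * μ G := by
        rw [← Measure.map_apply (measurable_signFlip _) hG, hμ, two_mul]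

lemma preimage_restrict_preimage_updateFinset {S : Finset ι} {E : Set (ι → ℝ)}
    (hES : DependsOn (· ∈ E) S) (w : ι → ℝ) :
    (fun v (i : S) => v i) ⁻¹' (Function.updateFinset w S ⁻¹' E) = E := by
  ext v
  exact (hES fun i hi => by simp [Function.updateFinset, mem_coe.1 hi]).to_iff

lemma measure_inter_eq_mul_of_dependsOn {μ : Measure (ι → ℝ)}
    (hμ : iIndepFun (fun i (v : ι → ℝ) => v i) μ) {S T : Finset ι} (hST : Disjoint S T)
    {E F : Set (ι → ℝ)} (hE : MeasurableSet E) (hF : MeasurableSet F)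
    (hES : DependsOn (· ∈ E) S) (hFT : DependsOn (· ∈ F) T) :
    μ (E ∩ F) = μ E * μ F := by
  have hST_indep := hμ.indepFun_finset S T hST measurable_pi_apply
  have := hST_indep.measure_inter_preimage_eq_mul _ _
    (measurable_updateFinset (x := 0) hE) (measurable_updateFinset (x := 0) hF)
  rwa [preimage_restrict_preimage_updateFinset hES,
    preimage_restrict_preimage_updateFinset hFT] at this

end Reflection

section FirstPassage

variable {ι : Type*} [LinearOrder ι] [LocallyFiniteOrderBot ι]

def firstPassage (x : ℝ) (k : ι) : Set (ι → ℝ) :=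
  {v | x < |∑ i ∈ Iic k, v i| ∧ ∀ j < k, |∑ i ∈ Iic j, v i| ≤ x}

lemma dependsOn_firstPassage (x : ℝ) (k : ι) :
    DependsOn (· ∈ firstPassage x k) (Iic k : Finset ι) := by
  intro v w hvw
  have hsum : ∀ j ≤ k, ∑ i ∈ Iic j, v i = ∑ i ∈ Iic j, w i := fun j hj =>
    sum_congr rfl fun i hi => hvw i (by simpa using (mem_Iic.1 hi).trans hj)
  simp only [firstPassage, Set.mem_ofPred_eq, hsum k le_rfl]
  exact propext <| and_congr_right' <| forall₂_congr fun j hj => by rw [hsum j hj.le]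

lemma pairwise_disjoint_firstPassage (x : ℝ) :
    Pairwise (Function.onFun Disjoint fun k : ι => firstPassage x k) := by
  have hlt : ∀ k l : ι, k < l → Disjoint (firstPassage x k) (firstPassage x l) :=
    fun k l hkl => Set.disjoint_left.2 fun v hk hl => (hl.2 k hkl).not_gt hk.1
  intro k l hkl
  rcases hkl.lt_or_gt with h | h
  exacts [hlt k l h, (hlt l k h).symm]

lemma abs_sum_Iio_le_of_mem_firstPassage {x : ℝ} (hx : 0 ≤ x) {k : ι} {v : ι → ℝ}
    (hv : v ∈ firstPassage x k) : |∑ i ∈ Iio k, v i| ≤ x := by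
  rcases (Iio k).eq_empty_or_nonempty with h | h
  · simpa [h] using hx
  · have hIio : Iio k = Iic ((Iio k).max' h) := by
      ext i
      simp only [mem_Iio, mem_Iic]
      exact ⟨fun hi => le_max' _ i (mem_Iio.2 hi), fun hi => hi.trans_lt (mem_Iio.1 (max'_mem _ h))⟩
    rw [hIio]
    exact hv.2 _ (mem_Iio.1 (max'_mem _ h))

variable [Fintype ι]

lemma measurableSet_firstPassage (x : ℝ) (k : ι) : MeasurableSet (firstPassage x k) := by
  simp only [firstPassage, Set.ofPred_and, Set.ofPred_forall]
  exact (measurableSet_lt measurable_const (by fun_prop)).inter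
    (.iInter fun j => .iInter fun _ => measurableSet_le (by fun_prop) measurable_const)

lemma exists_mem_firstPassage {x : ℝ} (hx : 0 ≤ x) {v : ι → ℝ} (hv : x < |∑ i, v i|) :
    ∃ k, v ∈ firstPassage x k := by
  have hι : (univ : Finset ι).Nonempty := by
    by_contra h
    simp [not_nonempty_iff_eq_empty.1 h] at hv
    linarith
  set K := univ.filter fun k => x < |∑ i ∈ Iic k, v i|
  have hK : K.Nonempty := ⟨univ.max' hι, by
    have : Iic (univ.max' hι) = univ := by ext i; simpa using le_max' _ i (mem_univ i)
    simpa [K, this] using hv⟩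
  refine ⟨K.min' hK, (mem_filter.1 (min'_mem K hK)).2, fun j hj => ?_⟩
  by_contra hc
  exact (min'_le K j (mem_filter.2 ⟨mem_univ j, not_le.1 hc⟩)).not_gt hj

lemma setOf_two_mul_add_lt_abs_sum_subset {x y : ℝ} (hx : 0 ≤ x) (hy : 0 ≤ y) :
    {v : ι → ℝ | 2 * x + y < |∑ i, v i|} ⊆
      (⋃ k, {v | y < |v k|}) ∪ ⋃ k, firstPassage x k ∩ {v | x < |∑ i ∈ (Iic k)ᶜ, v i|} := by
  intro v (hv : 2 * x + y < |∑ i, v i|)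
  by_cases hbig : ∃ k, y < |v k|
  · exact Or.inl (Set.mem_iUnion.2 hbig)
  push Not at hbig
  obtain ⟨k, hk⟩ := exists_mem_firstPassage hx (show x < |∑ i, v i| by linarith)
  refine Or.inr (Set.mem_iUnion.2 ⟨k, hk, ?_⟩)
  have hhead : |∑ i ∈ Iic k, v i| ≤ x + y := by
    rw [← Iio_insert, sum_insert (by simp)]
    exact (abs_add_le _ _).trans (add_le_add (hbig k) (abs_sum_Iio_le_of_mem_firstPassage hx hk))
      |>.trans_eq (add_comm _ _)
  have := abs_add_le (∑ i ∈ Iic k, v i) (∑ i ∈ (Iic k)ᶜ, v i)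
  rw [sum_add_sum_compl] at this
  show x < |∑ i ∈ (Iic k)ᶜ, v i|
  linarith

end FirstPassage

section Levy

variable {ι : Type*} [Fintype ι] [LinearOrder ι] [LocallyFiniteOrderBot ι]

lemma sum_measure_firstPassage_le {μ : Measure (ι → ℝ)}
    (hμ : ∀ s, μ.map (signFlip s) = μ) (x : ℝ) :
    ∑ k, μ (firstPassage x k) ≤ 2 * μ {v | x < |∑ i, v i|} := by
  set T := {v : ι → ℝ | x < |∑ i, v i|}
  have hk : ∀ k, μ (firstPassage x k) ≤ 2 * μ (firstPassage x k ∩ T) := fun k => by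
    have hA : firstPassage x k ∩ {v | x < |∑ i ∈ Iic k, v i|} = firstPassage x k :=
      Set.inter_eq_left.2 fun v hv => hv.1
    simpa only [hA] using measure_inter_lt_abs_sum_le (hμ _) (measurableSet_firstPassage x k)
      (dependsOn_firstPassage x k) x
  calc ∑ k, μ (firstPassage x k) ≤ ∑ k, 2 * μ (firstPassage x k ∩ T) :=
        sum_le_sum fun k _ => hk k
    _ = 2 * μ (⋃ k, firstPassage x k ∩ T) := by
        rw [← mul_sum, measure_iUnion _ fun k => (measurableSet_firstPassage x k).inter
          (measurableSet_lt measurable_const (by fun_prop)), tsum_fintype]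
        exact fun k l hkl => (pairwise_disjoint_firstPassage x hkl).mono
          Set.inter_subset_left Set.inter_subset_left
    _ ≤ 2 * μ T := by gcongr; exact Set.iUnion_subset fun k => Set.inter_subset_right

theorem pi_two_mul_add_lt_abs_sum_le {ν : ι → Measure ℝ} [∀ i, IsProbabilityMeasure (ν i)]
    (hν : ∀ i, (ν i).map Neg.neg = ν i) {x y : ℝ} (hx : 0 ≤ x) (hy : 0 ≤ y) :
    Measure.pi ν {v | 2 * x + y < |∑ i, v i|} ≤
      ∑ k, Measure.pi ν {v | y < |v k|} + 4 * Measure.pi ν {v | x < |∑ i, v i|} ^ 2 := by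
  set μ := Measure.pi ν
  set T := {v : ι → ℝ | x < |∑ i, v i|}
  set B := fun k : ι => {v : ι → ℝ | x < |∑ i ∈ (Iic k)ᶜ, v i|}
  have hflip := map_signFlip_pi hν
  have hB : ∀ k, μ (B k) ≤ 2 * μ T := fun k => by
    simpa using measure_inter_lt_abs_sum_le (hflip _) MeasurableSet.univ (fun _ _ _ => rfl) x
  have hfactor : ∀ k, μ (firstPassage x k ∩ B k) = μ (firstPassage x k) * μ (B k) := fun k =>
    measure_inter_eq_mul_of_dependsOn (iIndepFun_pi fun i => aemeasurable_id)
      disjoint_compl_right (measurableSet_firstPassage x k)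
      (measurableSet_lt measurable_const (by fun_prop)) (dependsOn_firstPassage x k)
      (dependsOn_setOf_lt_abs_sum x _)
  calc μ {v | 2 * x + y < |∑ i, v i|}
      ≤ ∑ k, μ {v | y < |v k|} + ∑ k, μ (firstPassage x k ∩ B k) :=
        (measure_mono (setOf_two_mul_add_lt_abs_sum_subset hx hy)).trans <|
          (measure_union_le _ _).trans <|
          add_le_add (measure_iUnion_fintype_le _ _) (measure_iUnion_fintype_le _ _)
    _ ≤ ∑ k, μ {v | y < |v k|} + (∑ k, μ (firstPassage x k)) * (2 * μ T) := by
        simp_rw [hfactor, sum_mul]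
        gcongr with k
        exact hB k
    _ ≤ ∑ k, μ {v | y < |v k|} + 2 * μ T * (2 * μ T) := by
        gcongr
        exact sum_measure_firstPassage_le hflip x
    _ = ∑ k, μ {v | y < |v k|} + 4 * μ T ^ 2 := by ring

end Levy

theorem stmt10 {Ω : Type*} [MeasurableSpace Ω] (P : Measure Ω) [IsProbabilityMeasure P]
    (n : ℕ) (X : Fin n → Ω → ℝ) (hmeas : ∀ k, Measurable (X k))
    (hindep : iIndepFun X P)
    (hsymm : ∀ k, Measure.map (X k) P = Measure.map (fun ω => -(X k ω)) P)
    (x y : ℝ) (hx : 0 < x) (hy : 0 < y) :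
    P {ω | 2 * x + y < |∑ k, X k ω|}
      ≤ (∑ k, P {ω | y < |X k ω|}) + 4 * (P {ω | x < |∑ k, X k ω|}) ^ 2 := by
  have hV : Measurable fun ω k => X k ω := measurable_pi_lambda _ hmeas
  have hlaw : P.map (fun ω k => X k ω) = Measure.pi fun k => P.map (X k) :=
    hindep.map_fun_eq_pi_map fun k => (hmeas k).aemeasurable
  have hsymm' : ∀ k, (P.map (X k)).map Neg.neg = P.map (X k) := fun k => by
    rw [Measure.map_map measurable_neg (hmeas k), hsymm k]; rfl
  have (k : Fin n) : IsProbabilityMeasure (P.map (X k)) :=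
    Measure.isProbabilityMeasure_map (hmeas k).aemeasurable
  have hP : ∀ A, MeasurableSet A →
      P ((fun ω k => X k ω) ⁻¹' A) = Measure.pi (fun k => P.map (X k)) A := fun A hA => by
    rw [← hlaw, Measure.map_apply hV hA]
  have hT : ∀ c, MeasurableSet {v : Fin n → ℝ | c < |∑ k, v k|} := fun c =>
    measurableSet_lt measurable_const (by fun_prop)
  have hXk : ∀ k, MeasurableSet {v : Fin n → ℝ | y < |v k|} := fun k =>
    measurableSet_lt measurable_const (by fun_prop)
  have key := pi_two_mul_add_lt_abs_sum_le hsymm' hx.le hy.le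
  simp only [← hP _ (hT _), ← hP _ (hXk _)] at key
  exact key
end

section
/- Let L be slowly varying, increasing to ∞, with φ(y) = ∫_1^y L(u)/u du and ψ = φ^{-1}. For c > 0 define n_k = ψ(ck). Then n_{k+1}/n_k → 1 and L(n_{k+1})/L(n_k) → 1 as k → ∞. -/
/-!
Write `a k = ψ (c k)` and `b k = ψ (c (k + 1))`, so that `∫_{a k}^{b k} L u / u du = c`.
Since `L` is increasing, this integral is at least `L (a k) log (b k / a k)`, hence
`0 ≤ log (b k / a k) ≤ c / L (a k) → 0`, i.e. `b k / a k → 1`. Eventually `a k ≤ b k ≤ 2 a k`,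
so `1 ≤ L (b k) / L (a k) ≤ L (2 a k) / L (a k) → 1` by slow variation.
-/

open Filter Real Set

open MeasureTheory intervalIntegral Topology

theorem MonotoneOn.intervalIntegrable_div_self {L : ℝ → ℝ} {a b : ℝ}
    (hL : MonotoneOn L (uIcc a b)) (h0 : (0 : ℝ) ∉ uIcc a b) :
    IntervalIntegrable (fun u => L u / u) volume a b := by
  simpa only [div_eq_mul_inv] using hL.intervalIntegrable.mul_continuousOn
    (continuousOn_inv₀.mono fun u hu => ne_of_mem_of_not_mem hu h0)

theorem MonotoneOn.mul_log_div_le_integral {L : ℝ → ℝ} {a b : ℝ} (hL : MonotoneOn L (Icc a b))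
    (ha : 0 < a) (hab : a ≤ b) : L a * log (b / a) ≤ ∫ u in a..b, L u / u := by
  have h0 : (0 : ℝ) ∉ uIcc a b := by
    rw [uIcc_of_le hab]
    exact fun h => ha.not_ge h.1
  calc L a * log (b / a) = ∫ u in a..b, L a / u := by
        simp only [div_eq_mul_inv, intervalIntegral.integral_const_mul,
          integral_inv_of_pos ha (ha.trans_le hab)]
    _ ≤ ∫ u in a..b, L u / u := by
        refine integral_mono_on hab ?_ ((uIcc_of_le hab ▸ hL).intervalIntegrable_div_self h0)
          fun u hu => div_le_div_of_nonneg_right (hL (left_mem_Icc.2 hab) hu hu.1)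
            (ha.trans_le hu.1).le
        simpa using (monotoneOn_const (c := L a)).intervalIntegrable_div_self h0

theorem continuousOn_primitive_Ici {f : ℝ → ℝ} {a : ℝ}
    (hf : ∀ b, a ≤ b → IntervalIntegrable f volume a b) :
    ContinuousOn (fun t => ∫ u in a..t, f u) (Ici a) := by
  intro x hx
  have hxa : a ≤ x + 1 := by linarith [mem_Ici.1 hx]
  refine ((continuousOn_primitive_interval' (hf (x + 1) hxa) left_mem_uIcc) x
    (by rw [uIcc_of_le hxa]; exact ⟨hx, by linarith⟩)).mono_of_mem_nhdsWithin ?_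
  rw [uIcc_of_le hxa, ← Ici_inter_Iic]
  exact inter_mem_nhdsWithin _ (Iic_mem_nhds (lt_add_one x))

theorem mapsTo_Ici_of_leftInvOn {φ ψ : ℝ → ℝ} {a : ℝ} (hφ : ContinuousOn φ (Ici a))
    (hφtop : Tendsto φ atTop atTop) (hψ : LeftInvOn ψ φ (Ici a)) :
    MapsTo ψ (Ici (φ a)) (Ici a) := by
  rintro x hx
  obtain ⟨y, hy, rfl⟩ := intermediate_value_Ici hφ hφtop hx
  rwa [hψ hy]

theorem tendsto_atTop_of_leftInvOn {φ ψ : ℝ → ℝ} {a : ℝ} (hφ : MonotoneOn φ (Ici a))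
    (hψmono : MonotoneOn ψ (Ici (φ a))) (hψ : LeftInvOn ψ φ (Ici a)) :
    Tendsto ψ atTop atTop := by
  refine tendsto_atTop_atTop.2 fun M => ⟨φ (max M a), fun x hx => ?_⟩
  have hMa : max M a ∈ Ici a := le_max_right M a
  have hφMa : φ (max M a) ∈ Ici (φ a) := hφ self_mem_Ici hMa hMa
  calc M ≤ max M a := le_max_left M a
    _ = ψ (φ (max M a)) := (hψ hMa).symm
    _ ≤ ψ x := hψmono hφMa (mem_Ici.2 (le_trans hφMa hx)) hx

theorem tendsto_one_of_mul_log_le {ι : Type*} {l : Filter ι} {x g : ι → ℝ} {c : ℝ}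
    (hx : ∀ᶠ i in l, 1 ≤ x i) (hg : Tendsto g l atTop) (hbound : ∀ᶠ i in l, g i * log (x i) ≤ c) :
    Tendsto x l (𝓝 1) := by
  have hlog : Tendsto (fun i => log (x i)) l (𝓝 0) := by
    refine tendsto_of_tendsto_of_tendsto_of_le_of_le' tendsto_const_nhds
      ((tendsto_const_nhds (x := c)).div_atTop hg) (hx.mono fun i hi => log_nonneg hi) ?_
    filter_upwards [hbound, hg.eventually_gt_atTop 0] with i hi hgi
    rw [le_div_iff₀ hgi, mul_comm]
    exact hi
  have hexp := (continuous_exp.tendsto 0).comp hlog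
  rw [exp_zero] at hexp
  exact hexp.congr' (hx.mono fun i hi => exp_log (zero_lt_one.trans_le hi))

theorem SlowlyVarying.tendsto_div_of_tendsto_div {L : ℝ → ℝ} (hsv : SlowlyVarying L) {x₀ : ℝ}
    (hL : MonotoneOn L (Ici x₀)) (hpos : ∀ᶠ x in atTop, 0 < L x) {ι : Type*} {l : Filter ι}
    {a b : ι → ℝ} (ha : Tendsto a l atTop) (hab : ∀ᶠ i in l, a i ≤ b i)
    (hba : Tendsto (fun i => b i / a i) l (𝓝 1)) :
    Tendsto (fun i => L (b i) / L (a i)) l (𝓝 1) := by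
  have hx₀ : ∀ᶠ i in l, x₀ ≤ a i := ha.eventually_ge_atTop x₀
  have hLa : ∀ᶠ i in l, 0 < L (a i) := ha.eventually hpos
  refine tendsto_of_tendsto_of_tendsto_of_le_of_le' tendsto_const_nhds
    ((hsv 2 two_pos).comp ha) ?_ ?_
  · filter_upwards [hx₀, hab, hLa] with i hi hi' hLi
    rw [one_le_div hLi]
    exact hL hi (hi.trans hi') hi'
  · filter_upwards [hx₀, hab, hLa, ha.eventually_gt_atTop 0,
      hba.eventually_lt_const one_lt_two] with i hi hi' hLi hai hb2
    have hb : b i ≤ 2 * a i := ((div_lt_iff₀ hai).1 hb2).le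
    exact div_le_div_of_nonneg_right
      (hL (hi.trans hi') (mem_Ici.2 (by linarith)) hb) hLi.le

theorem stmt13_general (L : ℝ → ℝ)
    (hmono : MonotoneOn L (Set.Ici 1))
    (htop : Tendsto L atTop atTop)
    (hsv : SlowlyVarying L)
    (φ ψ : ℝ → ℝ) (hφ : ∀ t, φ t = ∫ u in (1:ℝ)..t, L u / u)
    (hφmono : StrictMonoOn φ (Set.Ici 1))
    (hφtop : Tendsto φ atTop atTop)
    (hψ : ∀ y ∈ Set.Ici (1:ℝ), ψ (φ y) = y)
    (hψ' : ∀ x ∈ Set.Ici (0:ℝ), φ (ψ x) = x)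
    (c : ℝ) (hc : 0 < c) :
    Tendsto (fun k : ℕ => ψ (c * (k + 1)) / ψ (c * k)) atTop (nhds 1) ∧
      Tendsto (fun k : ℕ => L (ψ (c * (k + 1))) / L (ψ (c * k))) atTop (nhds 1) := by
  have hint (t : ℝ) (ht : 1 ≤ t) : IntervalIntegrable (fun u => L u / u) volume 1 t := by
    refine (hmono.mono ?_).intervalIntegrable_div_self ?_ <;> rw [uIcc_of_le ht]
    · exact Icc_subset_Ici_self
    · exact notMem_Icc_of_lt zero_lt_one
  have hφ1 : φ 1 = 0 := by simp [hφ]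
  have hφc : ContinuousOn φ (Ici 1) := (continuousOn_primitive_Ici hint).congr fun t _ => hφ t
  have hmaps : MapsTo ψ (Ici 0) (Ici 1) := hφ1 ▸ mapsTo_Ici_of_leftInvOn hφc hφtop hψ
  have hψmono : MonotoneOn ψ (Ici 0) :=
    Function.monotoneOn_of_rightInvOn_of_mapsTo hφmono.monotoneOn hψ' hmaps
  have hψtop : Tendsto ψ atTop atTop :=
    tendsto_atTop_of_leftInvOn hφmono.monotoneOn (hφ1 ▸ hψmono) hψ
  set a := fun k : ℕ => ψ (c * k)
  set b := fun k : ℕ => ψ (c * (k + 1))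
  have hck (k : ℕ) : 0 ≤ c * k := by positivity
  have ha1 (k : ℕ) : 1 ≤ a k := hmaps (hck k)
  have hab (k : ℕ) : a k ≤ b k := hψmono (hck k) (mem_Ici.2 (by positivity))
    (mul_le_mul_of_nonneg_left (by linarith) hc.le)
  have ha : Tendsto a atTop atTop := hψtop.comp (tendsto_natCast_atTop_atTop.const_mul_atTop hc)
  have hintegral (k : ℕ) : ∫ u in a k..b k, L u / u = c := by
    rw [← integral_interval_sub_left (hint _ ((ha1 k).trans (hab k))) (hint _ (ha1 k)), ← hφ,
      ← hφ, hψ' _ (mem_Ici.2 (by positivity)), hψ' _ (hck k)]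
    ring
  have hlog (k : ℕ) : L (a k) * log (b k / a k) ≤ c := hintegral k ▸
    (hmono.mono (Icc_subset_Ici_self.trans (Ici_subset_Ici.2 (ha1 k)))).mul_log_div_le_integral
      (zero_lt_one.trans_le (ha1 k)) (hab k)
  have hratio : Tendsto (fun k => b k / a k) atTop (𝓝 1) :=
    tendsto_one_of_mul_log_le (.of_forall fun k => (one_le_div (zero_lt_one.trans_le (ha1 k))).2
      (hab k)) (htop.comp ha) (.of_forall hlog)
  exact ⟨hratio, hsv.tendsto_div_of_tendsto_div hmono (htop.eventually_gt_atTop 0) ha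
    (.of_forall hab) hratio⟩

theorem stmt13 (L : ℝ → ℝ)
    (hdiff : DifferentiableOn ℝ L (Set.Ici 1))
    (hmono : MonotoneOn L (Set.Ici 1))
    (htop : Tendsto L atTop atTop)
    (hsv : SlowlyVarying L)
    (hdec : ∃ x₀ : ℝ, AntitoneOn (fun x => x * deriv L x / L x) (Set.Ici x₀))
    (φ ψ : ℝ → ℝ) (hφ : ∀ t, φ t = ∫ u in (1:ℝ)..t, L u / u)
    (hφmono : StrictMonoOn φ (Set.Ici 1))
    (hφtop : Tendsto φ atTop atTop)
    (hψ : ∀ y ∈ Set.Ici (1:ℝ), ψ (φ y) = y)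
    (hψ' : ∀ x ∈ Set.Ici (0:ℝ), φ (ψ x) = x)
    (c : ℝ) (hc : 0 < c) :
    Tendsto (fun k : ℕ => ψ (c * (k + 1)) / ψ (c * k)) atTop (nhds 1) ∧
      Tendsto (fun k : ℕ => L (ψ (c * (k + 1))) / L (ψ (c * k))) atTop (nhds 1) :=
  stmt13_general L hmono htop hsv φ ψ hφ hφmono hφtop hψ hψ' c hc
end
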